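/- The discrete-time Laguerre basis vectors are orthonormal: for the Laguerre functions l_ρ defined by L_0 = √(1-α²)·[1, -α, α², ..., (-α)^{M-1}]ᵀ and L_{i+1} = A_L L_i with the given lower-triangular matrix A_L, the infinite sums satisfy ∑_{i=0}^∞ l_ρ(i)·l_σ(i) = 1 if ρ = σ and 0 otherwise, for any pole α with 0 ≤ α < 1. -/

import Mathlib

noncomputable def AL (M : ℕ) (α : ℝ) : Matrix (Fin M) (Fin M) ℝ :=
  Matrix.of fun j k =>
    if (j : ℕ) = k then α
    else if (k : ℕ) < j then (-α) ^ ((j : ℕ) - k - 1) * (1 - α ^ 2)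
    else 0

noncomputable def LagL0 (M : ℕ) (α : ℝ) : Fin M → ℝ :=
  fun ρ => Real.sqrt (1 - α ^ 2) * (-α) ^ (ρ : ℕ)

noncomputable def Lag (M : ℕ) (α : ℝ) : ℕ → Fin M → ℝ
  | 0 => LagL0 M α
  | i + 1 => (AL M α).mulVec (Lag M α i)

/-!
Orthonormality is the statement that `∑ᵢ Lᵢ Lᵢᵀ = I`. The entries of `A_L` satisfy the geometric-sum
identity `A_L A_Lᵀ + L₀ L₀ᵀ = I`, which telescopes to `∑_{i<N} Lᵢ Lᵢᵀ = I - A_L^N (A_L^N)ᵀ`. Being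
lower triangular with constant diagonal `α`, `A_L` is `α I` plus a nilpotent matrix, so
`A_L^N → 0` for `|α| < 1` and the partial sums converge to `I`. The diagonal of the same identity
bounds `∑_{i<N} l_ρ(i)² ≤ 1`, which makes the series absolutely summable.
-/

open Finset Matrix Filter Topology

section
variable {𝕜 R : Type*} [NormedField 𝕜] [Ring R] [TopologicalSpace R] [ContinuousAdd R]
  [Algebra 𝕜 R] [ContinuousSMul 𝕜 R]

theorem tendsto_choose_mul_pow_sub_atTop_nhds_zero {c : 𝕜} (hc : ‖c‖ < 1) (k : ℕ) :
    Tendsto (fun n => (n.choose k : 𝕜) * c ^ (n - k)) atTop (𝓝 0) := by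
  rw [← tendsto_add_atTop_iff_nat k]
  simpa using (summable_choose_mul_geometric_of_norm_lt_one k hc).tendsto_atTop_zero

theorem tendsto_pow_algebraMap_add_of_isNilpotent {c : 𝕜} (hc : ‖c‖ < 1) {N : R}
    (hN : IsNilpotent N) : Tendsto (fun n => (algebraMap 𝕜 R c + N) ^ n) atTop (𝓝 0) := by
  obtain ⟨m, hm⟩ := hN
  have hexpand : ∀ n ≥ m, ∑ k ∈ range m, ((n.choose k : 𝕜) * c ^ (n - k)) • N ^ k
      = (algebraMap 𝕜 R c + N) ^ n := by
    intro n hn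
    rw [add_comm, Commute.add_pow (Algebra.commutes c N).symm]
    refine sum_subset (range_subset_range.2 (by omega)) (fun k _ hk => ?_) |>.trans
      (sum_congr rfl fun k _ => ?_)
    · rw [pow_eq_zero_of_le (by simpa using hk) hm, smul_zero]
    · rw [← map_pow, Algebra.smul_def, map_mul, map_natCast, mul_assoc, Nat.cast_comm,
        Algebra.commutes]
  refine Tendsto.congr' (eventually_atTop.2 ⟨m, hexpand⟩) ?_
  simpa using tendsto_finsetSum (range m) fun k _ =>
    (tendsto_choose_mul_pow_sub_atTop_nhds_zero hc k).smul_const (N ^ k)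
end

theorem Matrix.IsLowerTriangular.isNilpotent_sub_algebraMap {n R : Type*} [Fintype n]
    [DecidableEq n] [LinearOrder n] [CommRing R] {A : Matrix n n R} (hA : A.IsLowerTriangular)
    {c : R} (hc : ∀ i, A i i = c) : IsNilpotent (A - algebraMap R _ c) := by
  have hchar : A.charpoly = (Polynomial.X - Polynomial.C c) ^ Fintype.card n := by
    rw [← charpoly_transpose, charpoly_of_isUpperTriangular Aᵀ fun _ _ h => hA h]
    simp [hc]
  exact ⟨Fintype.card n, by simpa [hchar] using A.aeval_self_charpoly⟩

section GramSeries
variable {n : Type*} [Fintype n] [DecidableEq n]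

theorem sum_range_vecMulVec_pow_mulVec {R : Type*} [CommRing R] {A : Matrix n n R} {v : n → R}
    (h : A * Aᵀ = 1 - vecMulVec v v) (N : ℕ) :
    ∑ i ∈ range N, vecMulVec (A ^ i *ᵥ v) (A ^ i *ᵥ v) = 1 - A ^ N * (A ^ N)ᵀ := by
  induction N with
  | zero => simp
  | succ N ih =>
    have hterm : vecMulVec (A ^ N *ᵥ v) (A ^ N *ᵥ v) = A ^ N * vecMulVec v v * (A ^ N)ᵀ := by
      rw [mul_vecMulVec, vecMulVec_mul, vecMul_transpose]
    calc ∑ i ∈ range (N + 1), vecMulVec (A ^ i *ᵥ v) (A ^ i *ᵥ v)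
        = 1 - A ^ N * (1 - vecMulVec v v) * (A ^ N)ᵀ := by
          rw [sum_range_succ, ih, hterm, Matrix.mul_sub, Matrix.sub_mul, Matrix.mul_one]
          abel
      _ = 1 - A ^ (N + 1) * (A ^ (N + 1))ᵀ := by
          rw [← h, pow_succ, transpose_mul]
          simp only [Matrix.mul_assoc]

variable {A : Matrix n n ℝ} {v : n → ℝ}

theorem sum_range_mul_pow_mulVec_apply (h : A * Aᵀ = 1 - vecMulVec v v) (N : ℕ) (ρ σ : n) :
    ∑ i ∈ range N, (A ^ i *ᵥ v) ρ * (A ^ i *ᵥ v) σ = (1 - A ^ N * (A ^ N)ᵀ) ρ σ := by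
  simpa only [Matrix.sum_apply, vecMulVec_apply] using
    congr_fun (congr_fun (sum_range_vecMulVec_pow_mulVec h N) ρ) σ

theorem summable_sq_pow_mulVec_apply (h : A * Aᵀ = 1 - vecMulVec v v) (τ : n) :
    Summable fun i => (A ^ i *ᵥ v) τ ^ 2 := by
  refine summable_of_sum_range_le (c := 1) (fun _ => sq_nonneg _) fun N => ?_
  simp only [sq, sum_range_mul_pow_mulVec_apply h, Matrix.sub_apply, one_apply_eq, mul_apply,
    transpose_apply, sub_le_self_iff]
  exact sum_nonneg fun _ _ => mul_self_nonneg _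

theorem summable_mul_pow_mulVec_apply (h : A * Aᵀ = 1 - vecMulVec v v) (ρ σ : n) :
    Summable fun i => (A ^ i *ᵥ v) ρ * (A ^ i *ᵥ v) σ := by
  refine Summable.of_norm_bounded
    (((summable_sq_pow_mulVec_apply h ρ).add (summable_sq_pow_mulVec_apply h σ)).div_const 2)
    fun i => ?_
  rw [Real.norm_eq_abs, abs_mul, ← sq_abs ((A ^ i *ᵥ v) ρ), ← sq_abs ((A ^ i *ᵥ v) σ)]
  linarith [two_mul_le_add_sq |(A ^ i *ᵥ v) ρ| |(A ^ i *ᵥ v) σ|]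

theorem hasSum_mul_pow_mulVec_apply (h : A * Aᵀ = 1 - vecMulVec v v)
    (hA : Tendsto (A ^ ·) atTop (𝓝 0)) (ρ σ : n) :
    HasSum (fun i => (A ^ i *ᵥ v) ρ * (A ^ i *ᵥ v) σ) ((1 : Matrix n n ℝ) ρ σ) := by
  rw [(summable_mul_pow_mulVec_apply h ρ σ).hasSum_iff_tendsto_nat]
  simp only [sum_range_mul_pow_mulVec_apply h]
  have hcont : Continuous fun B : Matrix n n ℝ => (1 - B * Bᵀ) ρ σ :=
    (continuous_const.sub (continuous_id.matrix_mul continuous_id.matrix_transpose)).matrix_elem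
      ρ σ
  have hlim := (hcont.tendsto 0).comp hA
  rwa [Matrix.zero_mul, sub_zero] at hlim

end GramSeries

/-- The entries of `AL`, indexed by naturals so that sums over `Fin M` become sums over
`range M`. -/
def ALEntry (α : ℝ) (j k : ℕ) : ℝ :=
  if j = k then α else if k < j then (-α) ^ (j - k - 1) * (1 - α ^ 2) else 0

theorem AL_apply (M : ℕ) (α : ℝ) (j k : Fin M) : AL M α j k = ALEntry α j k := rfl

section ALEntry
variable (α : ℝ)

theorem ALEntry_self (k : ℕ) : ALEntry α k k = α := if_pos rfl

theorem ALEntry_eq_zero_of_lt {j k : ℕ} (h : j < k) : ALEntry α j k = 0 := by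
  simp [ALEntry, h.ne, h.not_gt]

theorem ALEntry_mul_ALEntry_of_lt {k l : ℕ} (d : ℕ) (hl : l < k) :
    ALEntry α (k + d) l * ALEntry α k l
      = (1 - α ^ 2) ^ 2 * (-α) ^ d * (α ^ 2) ^ (k - 1 - l) := by
  obtain ⟨t, rfl⟩ := Nat.exists_eq_add_of_lt hl
  simp only [ALEntry, if_neg (by omega : l + t + 1 + d ≠ l), if_neg (by omega : l + t + 1 ≠ l),
    if_pos (by omega : l < l + t + 1 + d), if_pos (by omega : l < l + t + 1),
    show l + t + 1 + d - l - 1 = d + t by omega, show l + t + 1 - l - 1 = t by omega,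
    show l + t + 1 - 1 - l = t by omega]
  rw [← neg_sq α, ← pow_mul, pow_add]
  ring

theorem ALEntry_mul_self_diag (k d : ℕ) :
    ALEntry α (k + d) k * α = (if d = 0 then 1 else 0) - (1 - α ^ 2) * (-α) ^ d := by
  rcases d with _ | d
  · simp only [add_zero, ALEntry_self, ite_true, pow_zero]
    ring
  · simp only [ALEntry, if_neg (Nat.succ_ne_zero d), if_neg (by omega : k + (d + 1) ≠ k),
      if_pos (by omega : k < k + (d + 1)), show k + (d + 1) - k - 1 = d by omega]
    ring

theorem sum_range_ALEntry_mul_ALEntry {k d n : ℕ} (h : k + d < n) :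
    ∑ l ∈ range n, ALEntry α (k + d) l * ALEntry α k l
      = (if d = 0 then 1 else 0) - (1 - α ^ 2) * (-α) ^ (2 * k + d) := by
  have htrunc : ∑ l ∈ range n, ALEntry α (k + d) l * ALEntry α k l
      = ∑ l ∈ range (k + 1), ALEntry α (k + d) l * ALEntry α k l := by
    refine (sum_subset (range_subset_range.2 (by omega)) fun l _ hl => ?_).symm
    rw [ALEntry_eq_zero_of_lt α (j := k) (by simpa using hl), mul_zero]
  have hgeom : (1 - α ^ 2) * ∑ t ∈ range k, (α ^ 2) ^ t = 1 - (α ^ 2) ^ k := by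
    linear_combination -geom_sum_mul (α ^ 2) k
  rw [htrunc, sum_range_succ, ALEntry_self, ALEntry_mul_self_diag,
    sum_congr rfl fun l hl => ALEntry_mul_ALEntry_of_lt α d (mem_range.1 hl), ← mul_sum,
    sum_range_reflect (fun t => (α ^ 2) ^ t) k, pow_add, pow_mul, neg_sq]
  linear_combination (1 - α ^ 2) * (-α) ^ d * hgeom

end ALEntry

theorem AL_mul_transpose {M : ℕ} {α : ℝ} (hα : α ^ 2 ≤ 1) :
    AL M α * (AL M α)ᵀ = 1 - vecMulVec (LagL0 M α) (LagL0 M α) := by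
  have hlower : ∀ j k : Fin M, k ≤ j →
      (AL M α * (AL M α)ᵀ) j k = (1 - vecMulVec (LagL0 M α) (LagL0 M α)) j k := by
    intro j k hkj
    obtain ⟨d, hd⟩ := Nat.exists_eq_add_of_le (Fin.le_def.1 hkj)
    have hjk : j = k ↔ d = 0 := by rw [Fin.ext_iff]; omega
    simp only [mul_apply, transpose_apply, AL_apply, Matrix.sub_apply, one_apply, vecMulVec_apply,
      LagL0, hjk]
    rw [Fin.sum_univ_eq_sum_range (fun l => ALEntry α j l * ALEntry α k l), hd,
      sum_range_ALEntry_mul_ALEntry α (hd ▸ j.isLt), mul_mul_mul_comm,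
      Real.mul_self_sqrt (by linarith), ← pow_add]
    ring_nf
  ext j k
  rcases le_total k j with hkj | hjk
  · exact hlower j k hkj
  · rw [← (isSymm_mul_transpose_self _).apply,
      ← (isSymm_one.sub (transpose_vecMulVec _ _)).apply]
    exact hlower k j hjk

theorem AL_isLowerTriangular (M : ℕ) (α : ℝ) : (AL M α).IsLowerTriangular :=
  fun _ _ hjk => ALEntry_eq_zero_of_lt α (Fin.lt_def.1 hjk)

theorem tendsto_pow_AL (M : ℕ) {α : ℝ} (hα : |α| < 1) :
    Tendsto (fun n => AL M α ^ n) atTop (𝓝 0) := by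
  have hN : IsNilpotent (AL M α - algebraMap ℝ _ α) :=
    (AL_isLowerTriangular M α).isNilpotent_sub_algebraMap fun _ => ALEntry_self α _
  simpa using tendsto_pow_algebraMap_add_of_isNilpotent (c := α) (by rwa [Real.norm_eq_abs]) hN

theorem Lag_eq_pow_mulVec (M : ℕ) (α : ℝ) (i : ℕ) :
    Lag M α i = AL M α ^ i *ᵥ LagL0 M α := by
  induction i with
  | zero => simp [Lag]
  | succ i ih => rw [Lag, ih, mulVec_mulVec, pow_succ']

theorem laguerre_orthonormal_general (M : ℕ) (α : ℝ) (hα0 : 0 ≤ α) (hα1 : α < 1)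
    (ρ σ : Fin M) :
    ∑' i : ℕ, Lag M α i ρ * Lag M α i σ = if ρ = σ then 1 else 0 := by
  have hgram := AL_mul_transpose (M := M) (show α ^ 2 ≤ 1 by nlinarith)
  have hdecay := tendsto_pow_AL M (abs_lt.2 ⟨by linarith, hα1⟩)
  simp only [Lag_eq_pow_mulVec]
  exact (hasSum_mul_pow_mulVec_apply hgram hdecay ρ σ).tsum_eq

/-- Orthonormality of the discrete-time Laguerre basis vectors. -/
theorem laguerre_orthonormal (M : ℕ) (hM : 1 ≤ M) (α : ℝ) (hα0 : 0 ≤ α) (hα1 : α < 1)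
    (ρ σ : Fin M) :
    ∑' i : ℕ, Lag M α i ρ * Lag M α i σ = if ρ = σ then 1 else 0 :=
  laguerre_orthonormal_general M α hα0 hα1 ρ σ
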